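/- Let f : X → X be a homeomorphism of a compact locally connected metric space and Λ an attractor for f. Then the boundary ∂Λ has only finitely many connected components. -/

import Mathlib

open Metric Filter Topology Set

variable {X : Type*}

/-- `(c i)_{i=0}^k` is a `δ`-chain of `f` (up to index `k`). -/
def IsDeltaChain [MetricSpace X] (f : X → X) (δ : ℝ) (k : ℕ) (c : ℕ → X) : Prop :=
  ∀ i < k, dist (f (c i)) (c (i + 1)) ≤ δ

/-- `x → y` : for every `δ > 0` there is a `δ`-chain from `x` to `y`. -/
def ChainReach [MetricSpace X] (f : X → X) (x y : X) : Prop :=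
  ∀ δ > 0, ∃ k ≥ 1, ∃ c : ℕ → X, c 0 = x ∧ c k = y ∧ IsDeltaChain f δ k c

/-- The chain recurrent set. -/
def ChainRec [MetricSpace X] (f : X → X) : Set X := {x | ChainReach f x x}

/-- `C` is a chain component of `f`. -/
def IsChainComponent [MetricSpace X] (f : X → X) (C : Set X) : Prop :=
  ∃ x, ChainReach f x x ∧
    C = {y | ChainReach f y y ∧ ChainReach f x y ∧ ChainReach f y x}

/-- A set is chain stable iff points chain-reachable from it stay in it. -/
def ChainStable [MetricSpace X] (f : X → X) (S : Set X) : Prop :=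
  ∀ x ∈ S, ∀ y, ChainReach f x y → y ∈ S

/-- `S` is "initially stable": if `y → x` with `x ∈ S` then `y ∈ S`. -/
def InitialStable [MetricSpace X] (f : X → X) (S : Set X) : Prop :=
  ∀ x ∈ S, ∀ y, ChainReach f y x → y ∈ S

/-- `f` restricted to `Λ` is chain transitive. -/
def ChainTransitiveOn [MetricSpace X] (f : X → X) (Λ : Set X) : Prop :=
  ∀ p ∈ Λ, ∀ q ∈ Λ, ∀ δ > 0, ∃ k ≥ 1, ∃ c : ℕ → X,
    c 0 = p ∧ c k = q ∧ (∀ i ≤ k, c i ∈ Λ) ∧ IsDeltaChain f δ k c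

/-- `f` has shadowing on `S`. -/
def ShadowsOn [MetricSpace X] (f : X → X) (S : Set X) : Prop :=
  ∀ ε > 0, ∃ δ > 0, ∀ (k : ℕ) (c : ℕ → X), (∀ i ≤ k, c i ∈ S) →
    IsDeltaChain f δ k c → ∃ x, ∀ i ≤ k, dist (c i) (f^[i] x) ≤ ε

/-- Iterate of a homeomorphism indexed by `ℤ`. -/
def hIter [TopologicalSpace X] (f : X ≃ₜ X) (i : ℤ) : X → X :=
  if 0 ≤ i then (⇑f)^[i.toNat] else (⇑f.symm)^[(-i).toNat]

/-- A `δ`-limit-pseudo orbit of the homeomorphism `f`. -/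
def IsLimitPseudoOrbit [MetricSpace X] (f : X ≃ₜ X) (δ : ℝ) (ξ : ℤ → X) : Prop :=
  (∀ i : ℤ, dist (f (ξ i)) (ξ (i + 1)) ≤ δ) ∧
  Tendsto (fun i : ℤ => dist (f (ξ i)) (ξ (i + 1))) atBot (nhds 0) ∧
  Tendsto (fun i : ℤ => dist (f (ξ i)) (ξ (i + 1))) atTop (nhds 0)

/-- `f` has L-shadowing on `S`. -/
def LShadowsOn [MetricSpace X] (f : X ≃ₜ X) (S : Set X) : Prop :=
  ∀ ε > 0, ∃ δ > 0, ∀ ξ : ℤ → X, (∀ i : ℤ, ξ i ∈ S) →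
    IsLimitPseudoOrbit f δ ξ →
    ∃ x : X, (∀ i : ℤ, dist (ξ i) (hIter f i x) ≤ ε) ∧
      Tendsto (fun i : ℤ => dist (ξ i) (hIter f i x)) atBot (nhds 0) ∧
      Tendsto (fun i : ℤ => dist (ξ i) (hIter f i x)) atTop (nhds 0)

/-- `f` is expansive on `S`. -/
def ExpansiveOn [MetricSpace X] (f : X ≃ₜ X) (S : Set X) : Prop :=
  ∃ e > 0, ∀ x y : X, (∀ i : ℤ, hIter f i x ∈ S) → (∀ i : ℤ, hIter f i y ∈ S) →
    (∀ i : ℤ, dist (hIter f i x) (hIter f i y) ≤ e) → x = y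

/-- Closed `b`-neighborhood of `S`. -/
def Nbhd [MetricSpace X] (b : ℝ) (S : Set X) : Set X := {x | Metric.infDist x S ≤ b}

/-- Attractor for a continuous map `f`. -/
def IsAttractor [TopologicalSpace X] (f : X → X) (Λ : Set X) : Prop :=
  IsClosed Λ ∧ f '' Λ = Λ ∧
    ∃ U : Set X, IsOpen U ∧ f '' closure U ⊆ U ∧ Λ = ⋂ i : ℕ, f^[i] '' U

/-- `f` is (topologically) mixing. -/
def IsMixing [TopologicalSpace X] (f : X → X) : Prop :=
  ∀ U V : Set X, IsOpen U → IsOpen V → U.Nonempty → V.Nonempty →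
    ∃ j : ℕ, ∀ i ≥ j, (f^[i] '' U ∩ V).Nonempty

/-- The ω-limit set of `x` under `f`. -/
def OmegaSet [TopologicalSpace X] (f : X → X) (x : X) : Set X :=
  {y | ∃ φ : ℕ → ℕ, StrictMono φ ∧ Tendsto (fun j => f^[φ j] x) atTop (nhds y)}

/-- `M` is a minimal set for `f`. -/
def IsMinimalSet [TopologicalSpace X] (f : X → X) (M : Set X) : Prop :=
  M.Nonempty ∧ IsClosed M ∧ f '' M ⊆ M ∧ ∀ x ∈ M, OmegaSet f x = M

section FrontierAux

private lemma lc_finite_cover [TopologicalSpace X] [LocallyConnectedSpace X] {G K : Set X}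
    (hG : IsOpen G) (hK : IsCompact K) (hKG : K ⊆ G) :
    ∃ (s : Finset X) (V : X → Set X), (∀ z ∈ s, z ∈ K) ∧
      (∀ z ∈ s, IsOpen (V z) ∧ IsPreconnected (V z) ∧ z ∈ V z ∧ V z ⊆ G) ∧
      K ⊆ ⋃ z ∈ s, V z := by
  have h := locallyConnectedSpace_iff_subsets_isOpen_isConnected.mp ‹_›
  have hV : ∀ x : X, x ∈ K → ∃ V : Set X, V ⊆ G ∧ IsOpen V ∧ x ∈ V ∧ IsConnected V := by
    intro x hx
    exact h x G (hG.mem_nhds (hKG hx))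
  choose! V hVG hVopen hVmem hVconn using hV
  obtain ⟨s, hs⟩ := hK.elim_finite_subcover_image (fun x hx => hVopen x hx)
    (fun x hx => mem_biUnion hx (hVmem x hx))
  obtain ⟨hsK, hsfin, hcov⟩ := hs
  refine ⟨hsfin.toFinset, V, ?_, ?_, ?_⟩
  · intro z hz; exact hsK (hsfin.mem_toFinset.mp hz)
  · intro z hz
    have hzK : z ∈ K := hsK (hsfin.mem_toFinset.mp hz)
    exact ⟨hVopen z hzK, (hVconn z hzK).isPreconnected, hVmem z hzK, hVG z hzK⟩
  · intro x hx
    have := hcov hx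
    simp only [mem_iUnion, exists_prop] at this ⊢
    obtain ⟨z, hz, hxz⟩ := this
    exact ⟨z, hsfin.mem_toFinset.mpr hz, hxz⟩

private lemma iInter_preconnected_of_nested [TopologicalSpace X] [T2Space X] {A : ℕ → Set X}
    (hcpt : ∀ n, IsCompact (A n)) (hconn : ∀ n, IsPreconnected (A n))
    (hnest : ∀ n, A (n + 1) ⊆ A n) :
    IsPreconnected (⋂ n, A n) := by
  have hmono : ∀ m n, m ≤ n → A n ⊆ A m := by
    intro m n hmn
    induction hmn with
    | refl => exact subset_rfl
    | step h ih => exact fun x hx => (ih (hnest _ hx))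
  set Z := ⋂ n, A n with hZ
  have hZcl : IsClosed Z := isClosed_iInter fun n => (hcpt n).isClosed
  have hZcpt : IsCompact Z := (hcpt 0).of_isClosed_subset hZcl (iInter_subset _ 0)
  rw [isPreconnected_closed_iff]
  intro t₁ t₂ ht₁ ht₂ hcover hne₁ hne₂
  by_contra hempty
  rw [not_nonempty_iff_eq_empty] at hempty
  have hAcpt : IsCompact (Z ∩ t₁) := hZcpt.inter_right ht₁
  have hBcpt : IsCompact (Z ∩ t₂) := hZcpt.inter_right ht₂
  have hdisj : Disjoint (Z ∩ t₁) (Z ∩ t₂) := by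
    rw [disjoint_iff_inter_eq_empty]
    rw [show Z ∩ t₁ ∩ (Z ∩ t₂) = Z ∩ (t₁ ∩ t₂) by ext x; simp [and_assoc]; tauto]
    exact hempty
  obtain ⟨u, v, huo, hvo, hAu, hBv, huv⟩ :=
    SeparatedNhds.of_isCompact_isCompact hAcpt hBcpt hdisj
  have hAn : ∃ n, A n ⊆ u ∪ v := by
    by_contra hno
    push_neg at hno
    have hnonempty : ∀ n, (A n ∩ (u ∪ v)ᶜ).Nonempty := by
      intro n
      obtain ⟨x, hx, hxu⟩ := not_subset.mp (hno n)
      exact ⟨x, hx, hxu⟩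
    have hdir : Directed (· ⊇ ·) (fun n => A n ∩ (u ∪ v)ᶜ) := by
      intro m n
      refine ⟨max m n, inter_subset_inter_left _ (hmono _ _ (le_max_left m n)),
        inter_subset_inter_left _ (hmono _ _ (le_max_right m n))⟩
    have hclosed : IsClosed ((u ∪ v)ᶜ) := (huo.union hvo).isClosed_compl
    have := IsCompact.nonempty_iInter_of_directed_nonempty_isCompact_isClosed _ hdir hnonempty
      (fun n => (hcpt n).inter_right hclosed) (fun n => (hcpt n).isClosed.inter hclosed)
    obtain ⟨x, hx⟩ := this
    rw [← iInter_inter] at hx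
    obtain ⟨hxZ, hxuv⟩ := hx
    rcases hcover hxZ with h1 | h2
    · exact hxuv (Or.inl (hAu ⟨hxZ, h1⟩))
    · exact hxuv (Or.inr (hBv ⟨hxZ, h2⟩))
  obtain ⟨n, hn⟩ := hAn
  obtain ⟨x₁, hx₁⟩ := hne₁
  obtain ⟨x₂, hx₂⟩ := hne₂
  have h1 : (A n ∩ u).Nonempty := ⟨x₁, (iInter_subset A n) hx₁.1, hAu ⟨hx₁.1, hx₁.2⟩⟩
  have h2 : (A n ∩ v).Nonempty := ⟨x₂, (iInter_subset A n) hx₂.1, hBv ⟨hx₂.1, hx₂.2⟩⟩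
  obtain ⟨w, hw⟩ := (hconn n) u v huo hvo hn h1 h2
  exact (huv.le_bot ⟨hw.2.1, hw.2.2⟩ : False)

private lemma exists_clopen_hull [TopologicalSpace X] [CompactSpace X] [T2Space X] (z : X)
    {W : Set X} (hW : IsOpen W) (hcomp : connectedComponent z ⊆ W) :
    ∃ S : Set X, IsClopen S ∧ z ∈ S ∧ S ⊆ W := by
  have hrep := connectedComponent_eq_iInter_isClopen z
  have : Nonempty { s : Set X // IsClopen s ∧ z ∈ s } := ⟨⟨univ, isClopen_univ, mem_univ z⟩⟩
  have hdir : Directed (· ⊇ ·) (fun s : { s : Set X // IsClopen s ∧ z ∈ s } => (s : Set X)) := by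
    intro s t
    exact ⟨⟨s ∩ t, s.2.1.inter t.2.1, ⟨s.2.2, t.2.2⟩⟩, inter_subset_left, inter_subset_right⟩
  obtain ⟨i, hi⟩ := exists_subset_nhds_of_isCompact' hdir
    (fun s => s.2.1.1.isCompact) (fun s => s.2.1.1)
    (fun x hx => hW.mem_nhds (hcomp (hrep ▸ hx)))
  exact ⟨i, i.2.1, i.2.2, hi⟩

private def hpow [TopologicalSpace X] (e : X ≃ₜ X) : ℕ → X ≃ₜ X
  | 0 => Homeomorph.refl X
  | n+1 => (hpow e n).trans e

private lemma hpow_coe [TopologicalSpace X] (e : X ≃ₜ X) (n : ℕ) :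
    ⇑(hpow e n) = (⇑e)^[n] := by
  funext x
  induction n with
  | zero => rfl
  | succ n ih =>
    show e (hpow e n x) = _
    rw [show hpow e n x = (⇑e)^[n] x from ih, Function.iterate_succ_apply']

end FrontierAux

theorem stmt19 [MetricSpace X] [CompactSpace X] [LocallyConnectedSpace X] (f : X ≃ₜ X)
    (Λ : Set X) (hΛ : IsAttractor (⇑f) Λ) :
    {C : Set X | ∃ x ∈ frontier Λ, C = connectedComponentIn (frontier Λ) x}.Finite := by
  classical
  obtain ⟨hΛcl, hΛinv, U, hUopen, htrap, hΛeq⟩ := hΛ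
  set F : X → X := ⇑f with hFdef
  set G : X → X := ⇑f.symm with hGdef
  have hFG : ∀ x, F (G x) = x := fun x => f.apply_symm_apply x
  have hGF : ∀ x, G (F x) = x := fun x => f.symm_apply_apply x
  have hFGit : ∀ (k : ℕ) (x : X), F^[k] (G^[k] x) = x :=
    fun k x => (Function.LeftInverse.iterate hFG k) x
  have hGFit : ∀ (k : ℕ) (x : X), G^[k] (F^[k] x) = x :=
    fun k x => (Function.LeftInverse.iterate hGF k) x
  have hFcont : Continuous F := f.continuous
  have hGcont : Continuous G := f.symm.continuous
  set clU := closure U with hclUdef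
  have hUsub : U ⊆ clU := subset_closure
  have hclUcl : IsClosed clU := isClosed_closure
  have htrap' : ∀ x ∈ clU, F x ∈ U := fun x hx => htrap (mem_image_of_mem F hx)
  have hUsave : ∀ x ∈ U, F x ∈ U := fun x hx => htrap' x (hUsub hx)
  have hUsaveIter : ∀ (k : ℕ) (x : X), x ∈ U → F^[k] x ∈ U := by
    intro k
    induction k with
    | zero => exact fun x hx => hx
    | succ k ih =>
      intro x hx
      rw [Function.iterate_succ_apply]
      exact ih _ (hUsave x hx)
  have hmemΛ : ∀ x : X, x ∈ Λ ↔ ∀ k : ℕ, G^[k] x ∈ U := by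
    intro x
    rw [hΛeq]
    simp only [mem_iInter]
    constructor
    · intro h k
      obtain ⟨u, hu, hux⟩ := h k
      have : G^[k] x = u := by rw [← hux, hGFit]
      rwa [this]
    · intro h k
      exact ⟨G^[k] x, h k, hFGit k x⟩
  have hΛU : Λ ⊆ U := fun x hx => by simpa using (hmemΛ x).1 hx 0
  have hGΛ : ∀ x ∈ Λ, G x ∈ Λ := by
    intro x hx
    rw [hmemΛ]
    intro k
    rw [← Function.iterate_succ_apply]
    exact (hmemΛ x).1 hx (k + 1)
  have hFΛ : ∀ x ∈ Λ, F x ∈ Λ := by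
    intro x hx
    rw [hmemΛ]
    intro k
    cases k with
    | zero => simpa using hUsave x (hΛU hx)
    | succ j =>
      rw [Function.iterate_succ_apply, hGF]
      exact (hmemΛ x).1 hx j
  have hΛpre : F ⁻¹' Λ = Λ := by
    ext x
    constructor
    · intro hx
      have := hGΛ _ hx
      rwa [hGF] at this
    · exact fun hx => hFΛ x hx
  have hFΛit : ∀ (k : ℕ) (y : X), y ∈ Λ → F^[k] y ∈ Λ := by
    intro k
    induction k with
    | zero => exact fun y hy => hy
    | succ j ih =>
      intro y hy
      rw [Function.iterate_succ_apply]
      exact ih _ (hFΛ y hy)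
  have hGnotΛ : ∀ (k : ℕ) (x : X), x ∉ Λ → G^[k] x ∉ Λ := by
    intro k x hx hcon
    exact hx (by simpa [hFGit] using hFΛit k _ hcon)
  -- U₁ is the image f(U), described as a preimage under G
  set U₁ : Set X := G ⁻¹' U with hU₁def
  have hU₁open : IsOpen U₁ := hUopen.preimage hGcont
  have hΛU₁ : Λ ⊆ U₁ := fun x hx => hΛU (hGΛ x hx)
  have hU₁U : U₁ ⊆ U := fun x hx => by
    have := hUsave (G x) hx
    rwa [hFG x] at this
  -- invariance of interior and frontier
  have hintpre : F ⁻¹' (interior Λ) = interior Λ := by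
    have h1 : F ⁻¹' (interior Λ) = interior (F ⁻¹' Λ) := f.preimage_interior Λ
    rw [h1, hΛpre]
  have hfrontpre : F ⁻¹' (frontier Λ) = frontier Λ := by
    have := f.preimage_frontier Λ
    rw [hΛpre] at this
    exact this
  have hGfront1 : ∀ x : X, x ∈ frontier Λ → G x ∈ frontier Λ := by
    intro x hx
    have : F (G x) ∈ frontier Λ := by rwa [hFG]
    rw [← hfrontpre]
    exact this
  have hGfront : ∀ (k : ℕ) (x : X), x ∈ frontier Λ → G^[k] x ∈ frontier Λ := by
    intro k
    induction k with
    | zero => exact fun x hx => hx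
    | succ j ih =>
      intro x hx
      rw [Function.iterate_succ_apply]
      exact ih _ (hGfront1 x hx)
  have hfrontΛ : frontier Λ ⊆ Λ := hΛcl.frontier_eq ▸ diff_subset
  have hfrontint : ∀ x ∈ frontier Λ, x ∉ interior Λ := by
    intro x hx
    rw [hΛcl.frontier_eq] at hx
    exact hx.2
  set Y : Set X := (interior Λ)ᶜ with hYdef
  have hYcl : IsClosed Y := isOpen_interior.isClosed_compl
  have hGY1 : ∀ x : X, x ∈ Y → G x ∈ Y := by
    intro x hx hcon
    apply hx
    have : F (G x) ∈ interior Λ := by rw [← hintpre] at hcon; exact hcon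
    rwa [hFG] at this
  have hGY : ∀ (k : ℕ) (x : X), x ∈ Y → G^[k] x ∈ Y := by
    intro k
    induction k with
    | zero => exact fun x hx => hx
    | succ j ih =>
      intro x hx
      rw [Function.iterate_succ_apply]
      exact ih _ (hGY1 x hx)
  have hΛcY : Λᶜ ⊆ Y := compl_subset_compl.mpr interior_subset
  -- the nested compact sets Mℓ
  set M : ℕ → Set X := fun ℓ => Y ∩ (G^[ℓ] ⁻¹' clU) with hMdef
  have hMcl : ∀ ℓ, IsClosed (M ℓ) := fun ℓ =>
    hYcl.inter (hclUcl.preimage (hGcont.iterate ℓ))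
  have hMcpt : ∀ ℓ, IsCompact (M ℓ) := fun ℓ => (hMcl ℓ).isCompact
  have hfrontM : ∀ ℓ, frontier Λ ⊆ M ℓ := by
    intro ℓ x hx
    exact ⟨hfrontint x hx, hUsub ((hmemΛ x).1 (hfrontΛ hx) ℓ)⟩
  have hclUstep : ∀ x : X, G x ∈ clU → x ∈ U := by
    intro x hx
    have := htrap' (G x) hx
    rwa [hFG] at this
  have hMnest : ∀ ℓ, M (ℓ + 1) ⊆ M ℓ := by
    intro ℓ x hx
    refine ⟨hx.1, ?_⟩
    have h1 : G^[ℓ + 1] x ∈ clU := hx.2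
    rw [Function.iterate_succ_apply'] at h1
    exact hUsub (hclUstep _ h1)
  have hMinter : ⋂ ℓ, M ℓ = frontier Λ := by
    apply Subset.antisymm
    · intro x hx
      rw [mem_iInter] at hx
      have hxY : x ∈ Y := (hx 0).1
      have hxΛ : x ∈ Λ := by
        rw [hmemΛ]
        intro k
        have h1 : G^[k + 1] x ∈ clU := (hx (k + 1)).2
        rw [Function.iterate_succ_apply'] at h1
        exact hclUstep _ h1
      rw [hΛcl.frontier_eq]
      exact ⟨hxΛ, hxY⟩
    · intro x hx
      rw [mem_iInter]
      exact fun ℓ => hfrontM ℓ hx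
  -- the gate and the flesh neighborhoods
  set Kg : Set X := clU \ U₁ with hKgdef
  have hKgcpt : IsCompact (Kg) := (hclUcl.sdiff hU₁open).isCompact
  set Ω : ℕ → Set X := fun n => Λᶜ ∩ (F^[n] ⁻¹' U) with hΩdef
  have hΩopen : ∀ n, IsOpen (Ω n) :=
    fun n => (hΛcl.isOpen_compl).inter (hUopen.preimage (hFcont.iterate n))
  have hKgΩ : Kg ⊆ Ω 1 := by
    rintro z ⟨hz1, hz2⟩
    refine ⟨fun hcon => hz2 (hΛU₁ hcon), ?_⟩
    show F^[1] z ∈ U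
    simpa using htrap' z hz1
  have hΩmono : ∀ n, Ω 1 ⊆ Ω (n + 1) := by
    rintro n z ⟨hz1, hz2⟩
    refine ⟨hz1, ?_⟩
    show F^[n + 1] z ∈ U
    rw [Function.iterate_succ_apply]
    exact hUsaveIter n _ (by simpa using hz2)
  -- finite cover of the gate by connected open subsets of Ω 1
  obtain ⟨s, Vc, hsK, hVc, hcov⟩ := lc_finite_cover (hΩopen 1) hKgcpt hKgΩ
  -- escape of points outside Λ
  have hout : ∀ y : X, y ∉ clU → G y ∉ clU := by
    intro y hy hcon
    exact hy (hUsub (hclUstep y hcon))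
  have hescape : ∀ p, p ∉ Λ → ∃ k, ∀ j, k ≤ j → G^[j] p ∉ clU := by
    intro p hp
    have h1 : ∃ k₀, G^[k₀] p ∉ U := by
      by_contra hcon
      push_neg at hcon
      exact hp ((hmemΛ p).2 hcon)
    obtain ⟨k₀, hk₀⟩ := h1
    refine ⟨k₀ + 1, ?_⟩
    intro j hj
    induction j, hj using Nat.le_induction with
    | base =>
      intro hcon
      rw [Function.iterate_succ_apply'] at hcon
      exact hk₀ (hclUstep _ hcon)
    | succ j hj ih =>
      rw [Function.iterate_succ_apply']
      exact hout _ ih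
  -- every connected component of Λᶜ meets Uᶜ
  have hΛco : IsOpen (Λᶜ) := hΛcl.isOpen_compl
  have hcΛG : G '' Λᶜ = Λᶜ := by
    show ⇑f.symm '' Λᶜ = Λᶜ
    rw [show ⇑f.symm '' Λᶜ = ⇑f ⁻¹' Λᶜ from congrFun (Homeomorph.image_symm f) Λᶜ]
    rw [preimage_compl]
    rw [show ⇑f ⁻¹' Λ = Λ from hΛpre]
  have hGinj : Function.Injective G := f.symm.injective
  have himg : ∀ p, p ∉ Λ → ∀ m : ℕ,
      G^[m] '' (connectedComponentIn Λᶜ p) = connectedComponentIn Λᶜ (G^[m] p) := by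
    intro p hp m
    induction m with
    | zero => simp
    | succ m ih =>
      rw [Function.iterate_succ', Set.image_comp, ih]
      have hmem : G^[m] p ∈ Λᶜ := hGnotΛ m p hp
      have h2 := f.symm.image_connectedComponentIn hmem
      rw [hcΛG] at h2
      rw [h2]
      rfl
  -- finite cover of Uᶜ inside Λᶜ
  have hUc_cpt : IsCompact (Uᶜ) := hUopen.isClosed_compl.isCompact
  have hUcΛc : Uᶜ ⊆ Λᶜ := compl_subset_compl.mpr hΛU
  obtain ⟨s₂, V₂, hs₂K, hV₂, hcov₂⟩ := lc_finite_cover hΛco hUc_cpt hUcΛc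
  have hmeet : ∀ p, p ∉ Λ → ∃ q ∈ connectedComponentIn Λᶜ p, q ∉ U := by
    intro p hp
    obtain ⟨k₀, hk₀⟩ := hescape p hp
    have hsel : ∀ j : ℕ, ∃ z, ∃ _ : z ∈ s₂,
        connectedComponentIn Λᶜ (G^[k₀ + j] p) = connectedComponentIn Λᶜ z := by
      intro j
      have hout' : G^[k₀ + j] p ∉ clU := hk₀ _ (Nat.le_add_right _ _)
      have hmemc : G^[k₀ + j] p ∈ Uᶜ := fun hc => hout' (hUsub hc)
      have hcc := hcov₂ hmemc
      simp only [mem_iUnion, exists_prop] at hcc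
      obtain ⟨z, hz, hmemV⟩ := hcc
      obtain ⟨hVo, hVpc, hVz, hVsub⟩ := hV₂ z hz
      refine ⟨z, hz, ?_⟩
      have h1 : V₂ z ⊆ connectedComponentIn Λᶜ (G^[k₀ + j] p) :=
        hVpc.subset_connectedComponentIn hmemV hVsub
      exact connectedComponentIn_eq (h1 hVz)
    choose zf hzf hzc using hsel
    have hpig : ∃ j₁ j₂ : ℕ, j₁ ≠ j₂ ∧ zf j₁ = zf j₂ := by
      have hfin : Finite {z // z ∈ s₂} := Finite.of_fintype _
      obtain ⟨j₁, j₂, hne, heq⟩ :=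
        Finite.exists_ne_map_eq_of_infinite (fun j : ℕ => (⟨zf j, hzf j⟩ : {z // z ∈ s₂}))
      exact ⟨j₁, j₂, hne, by simpa using congrArg Subtype.val heq⟩
    obtain ⟨j₁, j₂, hne, heq⟩ := hpig
    -- wlog j₁ < j₂
    have hmain : ∀ a D : ℕ, 1 ≤ D →
        connectedComponentIn Λᶜ (G^[a] p) = connectedComponentIn Λᶜ (G^[a + D] p) →
        ∃ q ∈ connectedComponentIn Λᶜ p, q ∉ U := by
      intro a D hD hcomp
      have hO₀ : connectedComponentIn Λᶜ (G^[a] p) = G^[a] '' connectedComponentIn Λᶜ p :=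
        (himg p hp a).symm
      have hOaD : connectedComponentIn Λᶜ (G^[a + D] p)
          = G^[a] '' (G^[D] '' connectedComponentIn Λᶜ p) := by
        rw [← himg p hp (a + D), Function.iterate_add, Set.image_comp]
      have hcancel : G^[D] '' connectedComponentIn Λᶜ p = connectedComponentIn Λᶜ p := by
        have h3 : G^[a] '' (G^[D] '' connectedComponentIn Λᶜ p)
            = G^[a] '' connectedComponentIn Λᶜ p := by
          rw [← hOaD, ← hcomp, hO₀]
        exact Set.image_injective.mpr (Function.Injective.iterate hGinj a) h3
      have hiter : ∀ m : ℕ, G^[D * m] '' connectedComponentIn Λᶜ p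
          = connectedComponentIn Λᶜ p := by
        intro m
        induction m with
        | zero => simp
        | succ m ih =>
          rw [Nat.mul_succ, Function.iterate_add, Set.image_comp, hcancel, ih]
      have hk₀le : k₀ ≤ D * k₀ := Nat.le_mul_of_pos_left k₀ hD
      have hqmem : G^[D * k₀] p ∈ connectedComponentIn Λᶜ p := by
        rw [← hiter k₀]
        exact mem_image_of_mem _ (mem_connectedComponentIn hp)
      exact ⟨G^[D * k₀] p, hqmem, fun hc => hk₀ _ hk₀le (hUsub hc)⟩
    rcases Nat.lt_or_ge j₁ j₂ with hlt | hge
    · have hDeq : k₀ + j₁ + (j₂ - j₁) = k₀ + j₂ := by omega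
      refine hmain (k₀ + j₁) (j₂ - j₁) (by omega) ?_
      rw [hDeq, hzc j₁, hzc j₂, heq]
    · have hlt : j₂ < j₁ := by omega
      have hDeq : k₀ + j₂ + (j₁ - j₂) = k₀ + j₁ := by omega
      refine hmain (k₀ + j₂) (j₁ - j₂) (by omega) ?_
      rw [hDeq, hzc j₁, hzc j₂, heq]
  -- components of M ℓ through frontier points contain points outside Λ
  have hflesh : ∀ (ℓ : ℕ) (x : X), x ∈ frontier Λ →
      ∃ p ∈ connectedComponentIn (M ℓ) x, p ∉ Λ := by
    intro ℓ x hx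
    by_contra hcon
    push_neg at hcon
    set κ := connectedComponentIn (M ℓ) x with hκdef
    have hxM : x ∈ M ℓ := hfrontM ℓ hx
    have hκΛ : κ ⊆ Λ := hcon
    set W : Set X := G^[ℓ] ⁻¹' U with hWdef
    have hWopen : IsOpen W := hUopen.preimage (hGcont.iterate ℓ)
    have hWU : W ⊆ U := by
      intro z hz
      have h1 := hUsaveIter ℓ _ hz
      rwa [hFGit] at h1
    have hWclU : W ⊆ G^[ℓ] ⁻¹' clU := fun z hz => hUsub hz
    have hκW : κ ⊆ W := fun p hp => (hmemΛ p).1 (hκΛ hp) ℓ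
    have hTcpt : IsCompact (M ℓ) := hMcpt ℓ
    haveI : CompactSpace (M ℓ) := isCompact_iff_compactSpace.mp hTcpt
    have hκim : κ = (↑) '' connectedComponent (⟨x, hxM⟩ : M ℓ) := connectedComponentIn_eq_image hxM
    have hWsub : IsOpen ((↑) ⁻¹' W : Set (M ℓ)) := hWopen.preimage continuous_subtype_val
    have hcompsub : connectedComponent (⟨x, hxM⟩ : M ℓ) ⊆ (↑) ⁻¹' W := by
      intro z hz
      have h1 : (z : X) ∈ κ := hκim ▸ mem_image_of_mem _ hz
      exact hκW h1
    obtain ⟨Sh, hShclopen, hShx, hShW⟩ := exists_clopen_hull _ hWsub hcompsub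
    set S : Set X := (↑) '' Sh with hSdef
    have hScpt : IsCompact S :=
      (hShclopen.isClosed.isCompact).image continuous_subtype_val
    have hSW : S ⊆ W := by
      rintro _ ⟨z, hz, rfl⟩
      exact hShW hz
    have hSM : S ⊆ M ℓ := by
      rintro _ ⟨z, hz, rfl⟩
      exact z.2
    have hxS : x ∈ S := ⟨⟨x, hxM⟩, hShx, rfl⟩
    have hκS : κ ⊆ S := by
      rw [hκim]
      exact image_mono (hShclopen.connectedComponent_subset hShx)
    have hMScpt : IsCompact (M ℓ \ S) := by
      have heq : M ℓ \ S = (↑) '' ((Shᶜ : Set (M ℓ))) := by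
        apply Subset.antisymm
        · rintro z ⟨hzM, hzS⟩
          exact ⟨⟨z, hzM⟩, fun hc => hzS ⟨⟨z, hzM⟩, hc, rfl⟩, rfl⟩
        · rintro _ ⟨z, hz, rfl⟩
          refine ⟨z.2, fun hc => ?_⟩
          obtain ⟨w, hw, hwz⟩ := hc
          have : w = z := Subtype.ext hwz
          exact hz (this ▸ hw)
      rw [heq]
      exact ((hShclopen.compl.isClosed).isCompact).image continuous_subtype_val
    have hdisjS : Disjoint S (M ℓ \ S) := disjoint_sdiff_right.mono_left subset_rfl
    obtain ⟨u, v, huo, hvo, hSu, hMv, huv⟩ :=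
      SeparatedNhds.of_isCompact_isCompact hScpt hMScpt hdisjS
    set N : Set X := u ∩ W with hNdef
    have hNopen : IsOpen N := huo.inter hWopen
    have hSN : S ⊆ N := subset_inter hSu hSW
    have hNM : ∀ q, q ∈ N → q ∈ M ℓ → q ∈ S := by
      intro q hqN hqM
      by_contra hqS
      have h1 : q ∈ v := hMv ⟨hqM, hqS⟩
      exact (huv.le_bot ⟨hqN.1, h1⟩ : False)
    have hNU : N ⊆ U := fun z hz => hWU hz.2
    have hNΛ : ∀ q ∈ N, q ∈ Λ := by
      intro q hqN
      by_contra hq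
      set O := connectedComponentIn Λᶜ q with hOdef
      have hqO : q ∈ O := mem_connectedComponentIn hq
      obtain ⟨w, hwO, hwU⟩ := hmeet q hq
      have hOpc : IsPreconnected O := isPreconnected_connectedComponentIn
      have hONS : ∀ z, z ∈ O → z ∈ N → z ∈ S := by
        intro z hzO hzN
        have hzY : z ∈ Y := hΛcY (connectedComponentIn_subset _ _ hzO)
        have hzM : z ∈ M ℓ := ⟨hzY, hWclU hzN.2⟩
        exact hNM z hzN hzM
      have hSccl : IsOpen (Sᶜ) := hScpt.isClosed.isOpen_compl
      have hcover : O ⊆ N ∪ Sᶜ := by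
        intro z hz
        by_cases hzS : z ∈ S
        · exact Or.inl (hSN hzS)
        · exact Or.inr hzS
      have hne1 : (O ∩ N).Nonempty := ⟨q, hqO, hqN⟩
      have hne2 : (O ∩ Sᶜ).Nonempty := ⟨w, hwO, fun hc => hwU (hNU (hSN hc))⟩
      obtain ⟨z, hz⟩ := hOpc N (Sᶜ) hNopen hSccl hcover hne1 hne2
      exact hz.2.2 (hONS z hz.1 hz.2.1)
    have hNint : N ⊆ interior Λ := interior_maximal (fun q hq => hNΛ q hq) hNopen
    exact hfrontint x hx (hNint (hSN hxS))
  -- main counting argument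
  -- a few more iterate facts
  have hFY1 : ∀ x ∈ Y, F x ∈ Y := by
    intro x hx hcon
    apply hx
    rw [← hintpre]
    exact hcon
  have hFY : ∀ (k : ℕ) (x : X), x ∈ Y → F^[k] x ∈ Y := by
    intro k
    induction k with
    | zero => exact fun x hx => hx
    | succ j ih =>
      intro x hx
      rw [Function.iterate_succ_apply]
      exact ih _ (hFY1 x hx)
  have hGYim : ∀ (k : ℕ), G^[k] '' Y = Y := by
    intro k
    apply Subset.antisymm
    · rintro _ ⟨y, hy, rfl⟩
      exact hGY k y hy
    · intro y hy
      exact ⟨F^[k] y, hFY k y hy, hGFit k y⟩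
  have hmemim : ∀ (k : ℕ) (A : Set X) (w : X), w ∈ G^[k] '' A ↔ F^[k] w ∈ A := by
    intro k A w
    constructor
    · rintro ⟨a, ha, rfl⟩
      rwa [hFGit]
    · intro h
      exact ⟨F^[k] w, h, hGFit k w⟩
  have hcancelit : ∀ (a b : ℕ) (w : X), G^[a] (F^[a + b] w) = F^[b] w := by
    intro a b w
    rw [Function.iterate_add_apply, hGFit]
  -- main counting
  by_contra hinf
  have hinf' : {C : Set X | ∃ x ∈ frontier Λ, C = connectedComponentIn (frontier Λ) x}.Infinite :=
    hinf
  obtain ⟨T, hTsub, hTcard⟩ := hinf'.exists_subset_card_eq (s.card + 1)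
  obtain ⟨C₀, hC₀⟩ := Finset.card_pos.mp (by omega : 0 < T.card)
  obtain ⟨x₀, hx₀, -⟩ := hTsub hC₀
  haveI : Nonempty X := ⟨x₀⟩
  have hwit : ∀ C ∈ T, ∃ xx, xx ∈ frontier Λ ∧ C = connectedComponentIn (frontier Λ) xx := by
    intro C hC
    obtain ⟨xx, h1, h2⟩ := hTsub hC
    exact ⟨xx, h1, h2⟩
  choose! xc hxcf hxceq using hwit
  -- components of M ℓ are compact
  have hkcpt : ∀ (ℓ : ℕ) (y : X), IsCompact (connectedComponentIn (M ℓ) y) := by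
    intro ℓ y
    by_cases hy : y ∈ M ℓ
    · have h1 : closure (connectedComponentIn (M ℓ) y) ⊆ M ℓ :=
        closure_minimal (connectedComponentIn_subset _ _) (hMcl ℓ)
      have h2 : closure (connectedComponentIn (M ℓ) y) ⊆ connectedComponentIn (M ℓ) y :=
        (isPreconnected_connectedComponentIn.closure).subset_connectedComponentIn
          (subset_closure (mem_connectedComponentIn hy)) h1
      exact ((hMcpt ℓ).of_isClosed_subset (isClosed_of_closure_subset h2)
        (connectedComponentIn_subset _ _))
    · rw [connectedComponentIn_eq_empty hy]
      exact isCompact_empty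
  have hMmono : ∀ ℓ ℓ' : ℕ, ℓ ≤ ℓ' → M ℓ' ⊆ M ℓ := by
    intro ℓ ℓ' hle
    induction hle with
    | refl => exact subset_rfl
    | step h ih => exact fun x hx => ih (hMnest _ hx)
  -- intersections of component chains land inside frontier components
  have hkcap : ∀ C ∈ T, (⋂ ℓ, connectedComponentIn (M ℓ) (xc C)) ⊆ C := by
    intro C hC
    have hxcM : ∀ ℓ, xc C ∈ M ℓ := fun ℓ => hfrontM ℓ (hxcf C hC)
    have hZpc : IsPreconnected (⋂ ℓ, connectedComponentIn (M ℓ) (xc C)) := by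
      apply iInter_preconnected_of_nested (fun ℓ => hkcpt ℓ _)
        (fun ℓ => isPreconnected_connectedComponentIn)
      intro ℓ
      exact connectedComponentIn_mono _ (hMnest ℓ)
    have hZfront : (⋂ ℓ, connectedComponentIn (M ℓ) (xc C)) ⊆ frontier Λ := by
      rw [← hMinter]
      exact iInter_mono (fun ℓ => connectedComponentIn_subset _ _)
    have hZx : xc C ∈ ⋂ ℓ, connectedComponentIn (M ℓ) (xc C) :=
      mem_iInter.mpr (fun ℓ => mem_connectedComponentIn (hxcM ℓ))
    have := hZpc.subset_connectedComponentIn hZx hZfront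
    rw [← hxceq C hC] at this
    exact this
  -- pairwise eventual separation of component chains
  have hsep2 : ∀ C C' : Set X, ∃ ℓ₀ : ℕ, C ∈ T → C' ∈ T → C ≠ C' → ∀ ℓ, ℓ₀ ≤ ℓ →
      connectedComponentIn (M ℓ) (xc C) ≠ connectedComponentIn (M ℓ) (xc C') := by
    intro C C'
    by_cases h : C ∈ T ∧ C' ∈ T ∧ C ≠ C'
    · obtain ⟨hC, hC', hne⟩ := h
      have hex : ∃ ℓ₀, connectedComponentIn (M ℓ₀) (xc C) ≠ connectedComponentIn (M ℓ₀) (xc C') := by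
        by_contra hcon
        push_neg at hcon
        have hmem : xc C' ∈ ⋂ ℓ, connectedComponentIn (M ℓ) (xc C) := by
          rw [mem_iInter]
          intro ℓ
          rw [hcon ℓ]
          exact mem_connectedComponentIn (hfrontM ℓ (hxcf C' hC'))
        have h1 : xc C' ∈ C := hkcap C hC hmem
        rw [hxceq C hC] at h1
        have h2 := connectedComponentIn_eq h1
        apply hne
        rw [hxceq C hC, hxceq C' hC', h2]
      obtain ⟨ℓ₀, hℓ₀⟩ := hex
      refine ⟨ℓ₀, fun _ _ _ ℓ hle => ?_⟩
      intro hcon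
      apply hℓ₀
      have hmem : xc C' ∈ connectedComponentIn (M ℓ₀) (xc C) := by
        have h1 : xc C' ∈ connectedComponentIn (M ℓ) (xc C) := by
          rw [hcon]
          exact mem_connectedComponentIn (hfrontM ℓ (hxcf C' ‹C' ∈ T›))
        exact (connectedComponentIn_mono _ (hMmono ℓ₀ ℓ hle)) h1
      exact connectedComponentIn_eq hmem
    · exact ⟨0, fun h1 h2 h3 => absurd ⟨h1, h2, h3⟩ h⟩
  choose pick hpick using hsep2
  set L : ℕ := T.sup (fun C => T.sup (fun C' => pick C C')) with hLdef
  have hLsep : ∀ C ∈ T, ∀ C' ∈ T, C ≠ C' →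
      connectedComponentIn (M L) (xc C) ≠ connectedComponentIn (M L) (xc C') := by
    intro C hC C' hC' hne
    have hle : pick C C' ≤ L := by
      calc pick C C' ≤ T.sup (fun C'' => pick C C'') :=
            Finset.le_sup (f := fun C'' => pick C C'') hC'
        _ ≤ L := Finset.le_sup (f := fun C => T.sup (fun C' => pick C C')) hC
    exact hpick C C' hC hC' hne L hle
  -- flesh points and escape times
  have hfl : ∀ C ∈ T, ∃ p, p ∈ connectedComponentIn (M L) (xc C) ∧ p ∉ Λ := by
    intro C hC
    obtain ⟨p, h1, h2⟩ := hflesh L (xc C) (hxcf C hC)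
    exact ⟨p, h1, h2⟩
  choose! pc hpc1 hpc2 using hfl
  have hesc : ∀ C ∈ T, ∃ k, ∀ j, k ≤ j → G^[j] (pc C) ∉ clU := by
    intro C hC
    exact hescape _ (hpc2 C hC)
  choose! kc hkc using hesc
  set n : ℕ := T.sup kc + 1 with hndef
  set m : ℕ := L + n with hmdef
  -- the backward-level compact set
  set Mneg : Set X := Y ∩ (F^[n] ⁻¹' clU) with hMnegdef
  have himage : G^[m] '' (M L) = Mneg := by
    have hinj : Function.Injective (G^[m]) := Function.Injective.iterate f.symm.injective m
    show G^[m] '' (Y ∩ G^[L] ⁻¹' clU) = Y ∩ (F^[n] ⁻¹' clU)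
    rw [Set.image_inter hinj, hGYim m]
    congr 1
    ext w
    rw [hmemim m]
    show G^[L] (F^[m] w) ∈ clU ↔ F^[n] w ∈ clU
    rw [hmdef, hcancelit L n w]
  have htrans : ∀ w, w ∈ M L →
      G^[m] '' connectedComponentIn (M L) w = connectedComponentIn Mneg (G^[m] w) := by
    intro w hw
    have h := (hpow f.symm m).image_connectedComponentIn (s := M L) (x := w) hw
    simp only [hpow_coe] at h
    rw [← hGdef] at h
    rw [h, himage]
  have hΩn : Ω 1 ⊆ Ω n := by
    rw [hndef]
    exact hΩmono _
  have hΩnM : Ω n ⊆ Mneg := by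
    rintro z ⟨hz1, hz2⟩
    exact ⟨hΛcY hz1, hUsub hz2⟩
  -- per element of T : a gate point and its component in Ω n
  have hgate : ∀ C ∈ T, ∃ g, g ∈ Kg ∧
      connectedComponentIn (Ω n) g ⊆ connectedComponentIn Mneg (G^[m] (xc C)) := by
    intro C hC
    have hxM : xc C ∈ M L := hfrontM L (hxcf C hC)
    have hκ'eq : G^[m] '' connectedComponentIn (M L) (xc C)
        = connectedComponentIn Mneg (G^[m] (xc C)) := htrans _ hxM
    set κ' := connectedComponentIn Mneg (G^[m] (xc C)) with hκ'def
    have hκ'pc : IsPreconnected κ' := isPreconnected_connectedComponentIn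
    have hmem1 : G^[m] (xc C) ∈ κ' := by
      rw [← hκ'eq]
      exact mem_image_of_mem _ (mem_connectedComponentIn hxM)
    have hmemU₁ : G^[m] (xc C) ∈ U₁ :=
      hΛU₁ (hfrontΛ (hGfront m _ (hxcf C hC)))
    have hmem2 : G^[m] (pc C) ∈ κ' := by
      rw [← hκ'eq]
      exact mem_image_of_mem _ (hpc1 C hC)
    have hnotclU : G^[m] (pc C) ∉ clU := by
      apply hkc C hC
      rw [hmdef, hndef]
      have := Finset.le_sup (f := kc) hC
      omega
    have hnotsub : ¬ (κ' ⊆ U₁ ∪ clUᶜ) := by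
      intro hsub
      obtain ⟨z, hz⟩ := hκ'pc U₁ (clUᶜ) hU₁open hclUcl.isOpen_compl hsub
        ⟨G^[m] (xc C), hmem1, hmemU₁⟩ ⟨G^[m] (pc C), hmem2, hnotclU⟩
      exact hz.2.2 (hUsub (hU₁U hz.2.1))
    obtain ⟨g, hgκ', hgout⟩ := not_subset.mp hnotsub
    have hgclU : g ∈ clU := by
      by_contra hc
      exact hgout (Or.inr hc)
    have hgU₁ : g ∉ U₁ := fun hc => hgout (Or.inl hc)
    refine ⟨g, ⟨hgclU, hgU₁⟩, ?_⟩
    have hgΩ : g ∈ Ω n := by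
      refine ⟨fun hc => hgU₁ (hΛU₁ hc), ?_⟩
      show F^[n] g ∈ U
      rw [hndef, Function.iterate_succ_apply]
      exact hUsaveIter _ _ (htrap' g hgclU)
    have hγsub : connectedComponentIn (Ω n) g ⊆ connectedComponentIn Mneg g :=
      (isPreconnected_connectedComponentIn).subset_connectedComponentIn
        (mem_connectedComponentIn hgΩ) ((connectedComponentIn_subset _ _).trans hΩnM)
    calc connectedComponentIn (Ω n) g ⊆ connectedComponentIn Mneg g := hγsub
      _ = κ' := (connectedComponentIn_eq hgκ').symm
  choose! gc hgc1 hgc2 using hgate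
  -- each gate point lies in one of the finitely many cover pieces
  have hcenter : ∀ C ∈ T, ∃ z ∈ s, connectedComponentIn (Ω n) (gc C) = connectedComponentIn (Ω n) z := by
    intro C hC
    have := hcov (hgc1 C hC)
    simp only [mem_iUnion, exists_prop] at this
    obtain ⟨z, hz, hmemV⟩ := this
    obtain ⟨hVo, hVpc, hVz, hVsub⟩ := hVc z hz
    refine ⟨z, hz, ?_⟩
    have h1 : Vc z ⊆ connectedComponentIn (Ω n) (gc C) :=
      hVpc.subset_connectedComponentIn hmemV (hVsub.trans hΩn)
    exact connectedComponentIn_eq (h1 hVz)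
  choose! zc' hzc'1 hzc'2 using hcenter
  -- pigeonhole
  have hmaps : ∀ C ∈ T, zc' C ∈ s := fun C hC => hzc'1 C hC
  have hlt : s.card < T.card := by omega
  obtain ⟨C, hC, C', hC', hne, heqz⟩ := Finset.exists_ne_map_eq_of_card_lt_of_maps_to hlt hmaps
  -- contradiction : distinct components of Mneg contain the same nonempty set
  have hγeq : connectedComponentIn (Ω n) (gc C) = connectedComponentIn (Ω n) (gc C') := by
    rw [hzc'2 C hC, hzc'2 C' hC', heqz]
  have hgmem : gc C ∈ connectedComponentIn (Ω n) (gc C) := by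
    apply mem_connectedComponentIn
    refine ⟨fun hc => (hgc1 C hC).2 (hΛU₁ hc), ?_⟩
    show F^[n] (gc C) ∈ U
    rw [hndef, Function.iterate_succ_apply]
    exact hUsaveIter _ _ (htrap' _ (hgc1 C hC).1)
  have hmem1 : gc C ∈ connectedComponentIn Mneg (G^[m] (xc C)) := hgc2 C hC hgmem
  have hmem2 : gc C ∈ connectedComponentIn Mneg (G^[m] (xc C')) := by
    apply hgc2 C' hC'
    rw [← hγeq]
    exact hgmem
  have hdisj : connectedComponentIn Mneg (G^[m] (xc C)) = connectedComponentIn Mneg (G^[m] (xc C')) := by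
    rw [connectedComponentIn_eq hmem1, connectedComponentIn_eq hmem2]
  -- but the images of distinct components are distinct
  have hML : connectedComponentIn (M L) (xc C) ≠ connectedComponentIn (M L) (xc C') :=
    hLsep C hC C' hC' hne
  apply hML
  have hinj : Function.Injective (G^[m]) := Function.Injective.iterate f.symm.injective m
  have h1 : G^[m] '' connectedComponentIn (M L) (xc C)
      = G^[m] '' connectedComponentIn (M L) (xc C') := by
    rw [htrans _ (hfrontM L (hxcf C hC)), htrans _ (hfrontM L (hxcf C' hC')), hdisj]
  exact Set.image_injective.mpr hinj h1
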